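/- arXiv:2210.15273 — 2 statements merged into one kernel-verified Lean document; each statement's English description precedes it below -/
import Mathlib

section
/- Let D = (E, F) be a delta-matroid and e ∈ E a non-orientable ribbon loop (i.e., e lies in no minimum-cardinality feasible set of D, and e lies in no minimum-cardinality feasible set of D^{*|e}). Then for every minimum-cardinality feasible set A of D, the set A ∪ {e} is feasible in D. -/
open Finset Polynomial

variable {α : Type*} [DecidableEq α]

/-- The twist of a collection of feasible sets with respect to `A`. -/
noncomputable def SS.twist (A : Finset α) (F : Finset (Finset α)) : Finset (Finset α) :=
  F.image (fun X => symmDiff A X)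

/-- Loop complementation at a single element `e`. -/
noncomputable def SS.lc (e : α) (F : Finset (Finset α)) : Finset (Finset α) :=
  symmDiff F ((F.filter (fun X => e ∉ X)).image (insert e))

/-- The two generating operations: twist `*` and loop complementation `×`. -/
inductive SS.Op | star | cross

/-- Apply a single operation at a single element. -/
noncomputable def SS.opElem : SS.Op → α → Finset (Finset α) → Finset (Finset α)
  | .star, e, F => SS.twist {e} F
  | .cross, e, F => SS.lc e F

/-- Apply a word in `{*, ×}` at a single element. -/
noncomputable def SS.wordElem (w : List SS.Op) (e : α) (F : Finset (Finset α)) : Finset (Finset α) :=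
  w.foldl (fun F o => SS.opElem o e F) F

/-- Apply a word in `{*, ×}` elementwise on a subset `A`. -/
noncomputable def SS.wordOn (w : List SS.Op) (A : Finset α) (F : Finset (Finset α)) : Finset (Finset α) :=
  A.toList.foldl (fun F e => SS.wordElem w e F) F

/-- Size of a largest feasible set. -/
noncomputable def SS.rmax (F : Finset (Finset α)) : ℕ := F.sup Finset.card

/-- Size of a smallest feasible set. -/
noncomputable def SS.rmin (F : Finset (Finset α)) : ℕ := sInf (Finset.card '' (F : Set (Finset α)))

/-- The width of a set system. -/
noncomputable def SS.width (F : Finset (Finset α)) : ℕ := SS.rmax F - SS.rmin F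

/-- The minimum-cardinality feasible sets. -/
noncomputable def SS.Fmin (F : Finset (Finset α)) : Finset (Finset α) :=
  F.filter (fun X => X.card = SS.rmin F)

/-- The maximum-cardinality feasible sets. -/
noncomputable def SS.Fmax (F : Finset (Finset α)) : Finset (Finset α) :=
  F.filter (fun X => X.card = SS.rmax F)

/-- The partial-`w` polynomial of a set system with ground set `E`. -/
noncomputable def SS.poly (w : List SS.Op) (E : Finset α) (F : Finset (Finset α)) :
    Polynomial ℤ :=
  ∑ A ∈ E.powerset, (Polynomial.X : Polynomial ℤ) ^ SS.width (SS.wordOn w A F)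

/-- A proper set system satisfying the symmetric exchange axiom. -/
noncomputable def SS.IsDeltaMatroid (F : Finset (Finset α)) : Prop :=
  F.Nonempty ∧ ∀ X ∈ F, ∀ Y ∈ F, ∀ u ∈ symmDiff X Y,
    ∃ v ∈ symmDiff X Y, symmDiff X {u, v} ∈ F

/-- Apply a sequence of single-element twists and loop complementations. -/
noncomputable def SS.seqApply : List (SS.Op × α) → Finset (Finset α) → Finset (Finset α)
  | [], F => F
  | (o, e) :: s, F => SS.seqApply s (SS.opElem o e F)

/-- A set system is vf-safe if every sequence of single-element twists and loop
complementations yields a delta-matroid. -/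
noncomputable def SS.VfSafe (F : Finset (Finset α)) : Prop :=
  ∀ s : List (SS.Op × α), SS.IsDeltaMatroid (SS.seqApply s F)

/-- The direct sum of two set systems. -/
noncomputable def SS.dsum (F F' : Finset (Finset α)) : Finset (Finset α) :=
  (F ×ˢ F').image (fun p => p.1 ∪ p.2)

open SS

/-!
In a delta-matroid every feasible set `X` contains a minimum feasible set: among the minimum
feasible sets take one, `B`, with `B \ X` as small as possible; exchanging an element of `B \ X`
against `X` cannot drop to a smaller feasible set, so it swaps in an element of `X \ B` and
shrinks `B \ X`.

Apply this in the twist `F * e` to `A ∪ {e}`, which is feasible there. Since `e` is a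
non-orientable ribbon loop, the minimum set obtained avoids `e` and so lies in `A`. Since `e` is a
ribbon loop of `F`, every feasible set of `F * e` has at least `|A|` elements. Hence `A` itself is
feasible in `F * e`, that is, `A ∪ {e}` is feasible in `F`.
-/

namespace SS

lemma singleton_symmDiff_of_mem {e : α} {X : Finset α} (h : e ∈ X) :
    symmDiff {e} X = X.erase e := by
  ext x
  by_cases hx : x = e <;> simp_all [mem_symmDiff]

lemma singleton_symmDiff_of_notMem {e : α} {X : Finset α} (h : e ∉ X) :
    symmDiff {e} X = insert e X := by
  ext x
  by_cases hx : x = e <;> simp_all [mem_symmDiff]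

lemma symmDiff_pair_of_mem_of_notMem {B : Finset α} {u v : α} (hu : u ∈ B) (hv : v ∉ B) :
    symmDiff B {u, v} = insert v (B.erase u) := by
  ext x
  by_cases hxu : x = u <;> by_cases hxv : x = v <;> subst_vars <;> simp_all [mem_symmDiff]

lemma mem_twist {A X : Finset α} {F : Finset (Finset α)} :
    X ∈ twist A F ↔ symmDiff A X ∈ F := by
  simp only [twist, mem_image]
  constructor
  · rintro ⟨Y, hY, rfl⟩
    rwa [symmDiff_symmDiff_cancel_left]
  · exact fun h => ⟨_, h, symmDiff_symmDiff_cancel_left A X⟩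

section

variable {β : Type*} {F : Finset (Finset β)} {X : Finset β}

lemma mem_Fmin : X ∈ Fmin F ↔ X ∈ F ∧ X.card = rmin F :=
  mem_filter

lemma rmin_le_card (hX : X ∈ F) : rmin F ≤ X.card :=
  Nat.sInf_le ⟨X, hX, rfl⟩

lemma Fmin_nonempty (hF : F.Nonempty) : (Fmin F).Nonempty := by
  obtain ⟨X, hX, hXc⟩ := Nat.sInf_mem ((coe_nonempty.mpr hF).image card)
  exact ⟨X, mem_Fmin.mpr ⟨hX, hXc⟩⟩

end

lemma IsDeltaMatroid.twist {F : Finset (Finset α)} (hF : IsDeltaMatroid F) (A : Finset α) :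
    IsDeltaMatroid (SS.twist A F) := by
  refine ⟨hF.1.image _, fun X hX Y hY u hu => ?_⟩
  rw [mem_twist] at hX hY
  have hXY : symmDiff (symmDiff A X) (symmDiff A Y) = symmDiff X Y := by
    rw [symmDiff_symmDiff_symmDiff_comm, symmDiff_self, bot_symmDiff]
  rw [← hXY] at hu ⊢
  obtain ⟨v, hv, hXv⟩ := hF.2 _ hX _ hY u hu
  refine ⟨v, hv, mem_twist.mpr ?_⟩
  rwa [← symmDiff_assoc]

lemma IsDeltaMatroid.exists_exchange_mem_Fmin {G : Finset (Finset α)} (hG : IsDeltaMatroid G)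
    {B X : Finset α} (hB : B ∈ Fmin G) (hX : X ∈ G) {u : α} (hu : u ∈ B \ X) :
    ∃ v ∈ X \ B, insert v (B.erase u) ∈ Fmin G := by
  obtain ⟨hBG, hBcard⟩ := mem_Fmin.mp hB
  obtain ⟨huB, huX⟩ := mem_sdiff.mp hu
  obtain ⟨v, hv, hBv⟩ := hG.2 B hBG X hX u (mem_symmDiff.mpr (Or.inl ⟨huB, huX⟩))
  rcases mem_symmDiff.mp hv with ⟨hvB, -⟩ | ⟨hvX, hvB⟩
  · have huvB : {u, v} ⊆ B := insert_subset huB (singleton_subset_iff.mpr hvB)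
    rw [symmDiff_comm, symmDiff_of_le huvB] at hBv
    have := rmin_le_card hBv
    have := card_sdiff_of_subset huvB
    have := card_le_card huvB
    have : 0 < ({u, v} : Finset α).card := card_pos.mpr (insert_nonempty u {v})
    omega
  · rw [symmDiff_pair_of_mem_of_notMem huB hvB] at hBv
    refine ⟨v, mem_sdiff.mpr ⟨hvX, hvB⟩, mem_Fmin.mpr ⟨hBv, ?_⟩⟩
    rw [card_insert_of_notMem (fun h => hvB (mem_of_mem_erase h)), card_erase_add_one huB, hBcard]

lemma IsDeltaMatroid.exists_mem_Fmin_subset {G : Finset (Finset α)} (hG : IsDeltaMatroid G)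
    {X : Finset α} (hX : X ∈ G) : ∃ B ∈ Fmin G, B ⊆ X := by
  obtain ⟨B, hB, hBmin⟩ :=
    exists_min_image (Fmin G) (fun B => (B \ X).card) (Fmin_nonempty hG.1)
  refine ⟨B, hB, sdiff_eq_empty_iff_subset.mp (eq_empty_of_forall_notMem fun u hu => ?_)⟩
  obtain ⟨v, hv, hB'⟩ := hG.exists_exchange_mem_Fmin hB hX hu
  have hshrink : insert v (B.erase u) \ X = (B \ X).erase u := by
    rw [insert_sdiff_of_mem _ (mem_sdiff.mp hv).1, erase_sdiff_comm]
  have := hBmin _ hB'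
  rw [hshrink, card_erase_of_mem hu] at this
  have := card_pos.mpr ⟨u, hu⟩
  omega

lemma rmin_le_card_of_mem_twist_singleton {F : Finset (Finset α)} {e : α}
    (he : ∀ A ∈ Fmin F, e ∉ A) {Z : Finset α} (hZ : Z ∈ twist {e} F) :
    rmin F ≤ Z.card := by
  rw [mem_twist] at hZ
  by_cases heZ : e ∈ Z
  · rw [singleton_symmDiff_of_mem heZ] at hZ
    exact (rmin_le_card hZ).trans card_erase_le
  · rw [singleton_symmDiff_of_notMem heZ] at hZ
    have hne : (insert e Z).card ≠ rmin F := fun h =>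
      he _ (mem_Fmin.mpr ⟨hZ, h⟩) (mem_insert_self e Z)
    have := rmin_le_card hZ
    rw [card_insert_of_notMem heZ] at this hne
    omega

end SS

theorem stmt10 (F : Finset (Finset α)) (hD : SS.IsDeltaMatroid F) (e : α)
    (h1 : ∀ A ∈ SS.Fmin F, e ∉ A)
    (h2 : ∀ A ∈ SS.Fmin (SS.twist {e} F), e ∉ A) :
    ∀ A ∈ SS.Fmin F, insert e A ∈ F := by
  intro A hA
  have heA : e ∉ A := h1 A hA
  have hAe : insert e A ∈ twist {e} F := by
    rw [mem_twist, singleton_symmDiff_of_mem (mem_insert_self e A), erase_insert heA]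
    exact (mem_Fmin.mp hA).1
  obtain ⟨B, hB, hBsub⟩ := (hD.twist {e}).exists_mem_Fmin_subset hAe
  have hBA : B ⊆ A := (subset_insert_iff_of_notMem (h2 B hB)).mp hBsub
  have hBF : B ∈ twist {e} F := (mem_Fmin.mp hB).1
  obtain rfl : B = A := eq_of_subset_of_card_le hBA <| by
    rw [(mem_Fmin.mp hA).2]
    exact rmin_le_card_of_mem_twist_singleton h1 hBF
  rwa [mem_twist, singleton_symmDiff_of_notMem heA] at hBF
end

section
/- For any set system D = (E, F), any X ⊆ E, and any Y ⊆ E: Y is feasible in D^{×|X} if and only if the number of feasible sets Z of D with Y − X ⊆ Z ⊆ Y is odd. -/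
/-!
A set `Y` lies in the loop complementation of `F` at `e` exactly when one, but not both, of
`Y ∈ F` and `e ∈ Y ∧ Y - e ∈ F` holds. Inducting on `X`, membership in `F^{×|X}` becomes the
parity of the number of feasible sets in the interval `[Y - X, Y]`: when `e` is added to `X`
and `e ∈ Y`, the interval `[Y - (X + e), Y]` is the disjoint union of `[Y - X, Y]` (sets
containing `e`) and `[(Y - e) - X, Y - e]` (sets avoiding `e`).
-/

open Finset Polynomial

variable {α : Type*} [DecidableEq α]

open SS

namespace SS

theorem wordOn_cross (A : Finset α) (F : Finset (Finset α)) :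
    wordOn [Op.cross] A F = A.toList.foldl (fun F e => lc e F) F :=
  rfl

theorem mem_lc_iff {e : α} {F : Finset (Finset α)} {Y : Finset α} :
    Y ∈ lc e F ↔ Xor (Y ∈ F) (e ∈ Y ∧ Y.erase e ∈ F) := by
  have h_insert : Y ∈ (F.filter (fun W => e ∉ W)).image (insert e) ↔ e ∈ Y ∧ Y.erase e ∈ F := by
    rw [mem_image]
    constructor
    · rintro ⟨W, hW, rfl⟩
      rw [mem_filter] at hW
      exact ⟨mem_insert_self e W, by rw [erase_insert hW.2]; exact hW.1⟩
    · rintro ⟨heY, hY⟩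
      exact ⟨Y.erase e, mem_filter.2 ⟨hY, notMem_erase e Y⟩, insert_erase heY⟩
  rw [lc, mem_symmDiff, h_insert]
  rfl

theorem card_filter_between_eq_add (F : Finset (Finset α)) (L U : Finset α) (e : α) :
    #{Z ∈ F | L ⊆ Z ∧ Z ⊆ U} =
      #{Z ∈ F | insert e L ⊆ Z ∧ Z ⊆ U} + #{Z ∈ F | L ⊆ Z ∧ Z ⊆ U.erase e} := by
  rw [← card_filter_add_card_filter_not (p := fun Z => e ∈ Z), filter_filter, filter_filter]
  congr 2 <;> ext Z
  · simp only [mem_filter, insert_subset_iff]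
    tauto
  · simp only [mem_filter, subset_erase]
    tauto

theorem mem_foldl_lc_iff (F : Finset (Finset α)) {L : List α} (hL : L.Nodup) (Y : Finset α) :
    Y ∈ L.foldl (fun F e => lc e F) F ↔ Odd #{Z ∈ F | Y \ L.toFinset ⊆ Z ∧ Z ⊆ Y} := by
  induction L using List.reverseRecOn generalizing Y with
  | nil =>
    have h_single : {Z ∈ F | Y ⊆ Z ∧ Z ⊆ Y} = {Z ∈ F | Z = Y} := by
      congr! 2 with Z
      exact and_comm.trans subset_antisymm_iff.symm
    by_cases hY : Y ∈ F <;> simp [h_single, filter_eq', hY]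
  | append_singleton L e ih =>
    obtain ⟨hL, heL⟩ : L.Nodup ∧ e ∉ L := by
      rw [List.nodup_append_comm, List.singleton_append, List.nodup_cons] at hL
      exact hL.symm
    simp only [List.foldl_append, List.foldl_cons, List.foldl_nil, mem_lc_iff, ih hL,
      List.toFinset_append, List.toFinset_cons, List.toFinset_nil, insert_empty_eq]
    have heS : e ∉ L.toFinset := by rwa [List.mem_toFinset]
    rw [union_comm, ← insert_eq, sdiff_insert, ← erase_sdiff_comm]
    by_cases heY : e ∈ Y
    · have h_lower : insert e (Y.erase e \ L.toFinset) = Y \ L.toFinset := by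
        rw [erase_sdiff_comm, insert_erase (mem_sdiff.2 ⟨heY, heS⟩)]
      rw [card_filter_between_eq_add F (Y.erase e \ L.toFinset) Y e, h_lower, Nat.odd_add]
      simp only [heY, true_and, xor_iff_iff_not, Nat.not_odd_iff_even]
    · rw [erase_eq_of_notMem heY]
      simp only [heY, false_and, xor_iff_iff_not, not_false_eq_true, iff_true]

end SS

theorem stmt17 (F : Finset (Finset α)) (X Y : Finset α) :
    Y ∈ SS.wordOn [SS.Op.cross] X F ↔
      Odd (F.filter (fun Z => Y \ X ⊆ Z ∧ Z ⊆ Y)).card := by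
  rw [SS.wordOn_cross, SS.mem_foldl_lc_iff F X.nodup_toList, toList_toFinset]
end
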